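/- Let B be a Banach A-bimodule. If there exists a₀ ∈ A such that B** = a₀B** (i.e., every b'' ∈ B** equals π_ℓ***(a₀, x'') for some x'' ∈ B**) and a₀ has the Rw*w-property with respect to B, then Z_{A**}(B**) = B**. -/

import Mathlib

open Filter Topology

/-- `arensHalf m y''` is the map `z' ↦ m**(y'', z')`, where
`⟨m*(z', x), y⟩ = ⟨z', m(x,y)⟩` and `⟨m**(y'', z'), x⟩ = ⟨y'', m*(z', x)⟩`. -/
noncomputable def arensHalf {X Y Z : Type*} [NormedAddCommGroup X] [NormedSpace ℝ X]
    [NormedAddCommGroup Y] [NormedSpace ℝ Y] [NormedAddCommGroup Z] [NormedSpace ℝ Z]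
    (m : X →L[ℝ] Y →L[ℝ] Z) (y'' : (Y →L[ℝ] ℝ) →L[ℝ] ℝ) :
    (Z →L[ℝ] ℝ) →L[ℝ] (X →L[ℝ] ℝ) :=
  (ContinuousLinearMap.compL ℝ X (Y →L[ℝ] ℝ) ℝ y'').comp
    (((ContinuousLinearMap.compL ℝ X (Y →L[ℝ] Z) (Y →L[ℝ] ℝ)).flip m).comp
      (ContinuousLinearMap.compL ℝ Y Z ℝ))

/-- The first Arens extension `m*** : X** × Y** → Z**` of a bounded bilinear map `m`,
defined by `⟨m***(x'', y''), z'⟩ = ⟨x'', m**(y'', z')⟩`. -/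
noncomputable def arens {X Y Z : Type*} [NormedAddCommGroup X] [NormedSpace ℝ X]
    [NormedAddCommGroup Y] [NormedSpace ℝ Y] [NormedAddCommGroup Z] [NormedSpace ℝ Z]
    (m : X →L[ℝ] Y →L[ℝ] Z) (x'' : (X →L[ℝ] ℝ) →L[ℝ] ℝ) (y'' : (Y →L[ℝ] ℝ) →L[ℝ] ℝ) :
    (Z →L[ℝ] ℝ) →L[ℝ] ℝ :=
  x''.comp (arensHalf m y'')

/-- Canonical embedding of a normed space into its double dual. -/
noncomputable def incl {X : Type*} [NormedAddCommGroup X] [NormedSpace ℝ X] (x : X) :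
    (X →L[ℝ] ℝ) →L[ℝ] ℝ :=
  ContinuousLinearMap.apply ℝ ℝ x

/-- `f : E** → F**` is weak*-to-weak* continuous. -/
def WWCont {E F : Type*} [NormedAddCommGroup E] [NormedSpace ℝ E]
    [NormedAddCommGroup F] [NormedSpace ℝ F]
    (f : ((E →L[ℝ] ℝ) →L[ℝ] ℝ) → ((F →L[ℝ] ℝ) →L[ℝ] ℝ)) : Prop :=
  ∀ (l : Filter ((E →L[ℝ] ℝ) →L[ℝ] ℝ)) (u : (E →L[ℝ] ℝ) →L[ℝ] ℝ),
    (∀ φ : E →L[ℝ] ℝ, Filter.Tendsto (fun v => v φ) l (nhds (u φ))) →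
    ∀ ψ : F →L[ℝ] ℝ, Filter.Tendsto (fun v => f v ψ) l (nhds (f u ψ))

/-! Write `b'' = a₀ · x''`. Unfolding the Arens products,
`π_r***(b'', a'')(b') = x''(c ∘ π_ℓ(a₀, ·))` with `c = π_r**(a'', b')`, so it suffices that the
functional `c ↦ x''(c ∘ π_ℓ(a₀, ·))` on `B*` is evaluation at some `z ∈ B`: then
`π_r***(b'', a'')(b') = a''(b' ∘ π_r(z, ·))`, which is weak*-continuous in `a''`.

For `T = π_ℓ(a₀, ·)` this says that `T**` maps `B**` into `B`. If it did not, a functional `Λ` on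
`B**` would separate `x'' ∘ T*` from `B`, and Goldstine's theorem, applied alternately to `Λ` and to
`x''`, yields bounded sequences `c_k ∈ B*` and `b_m ∈ B` with `c_k(T b_m) > 3/4` for `k ≤ m` and
`|c_k(T b_j)| < 1/8` for `j < k`. Along a free ultrafilter on `ℕ`, `c_k → c` and `b_m → β` weak*;
then `(c_k - c) ∘ T` is weak*-null, but `β((c_k - c) ∘ T) ≥ 5/8`, against the Rw*w-property. -/

open NormedSpace (inclusionInDoubleDual)

theorem Submodule.exists_strongDual_eq_zero_of_notMem {E : Type*} [NormedAddCommGroup E]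
    [NormedSpace ℝ E] (S : Submodule ℝ E) (hS : IsClosed (S : Set E)) {x : E} (hx : x ∉ S) :
    ∃ f : StrongDual ℝ E, (∀ y ∈ S, f y = 0) ∧ f x = 1 := by
  obtain ⟨f, u, hfS, hfx⟩ := geometric_hahn_banach_closed_point S.convex hS hx
  have hu : 0 < u := by simpa using hfS 0 S.zero_mem
  -- a functional bounded above on a subspace vanishes there
  have hf : ∀ y ∈ S, f y = 0 := by
    intro y hy
    by_contra hfy
    have := hfS _ (S.smul_mem (u / f y) hy)
    rw [map_smul, smul_eq_mul, div_mul_cancel₀ _ hfy] at this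
    exact lt_irrefl _ this
  refine ⟨(f x)⁻¹ • f, fun y hy => by simp [hf y hy], ?_⟩
  simp [inv_mul_cancel₀ (hu.trans hfx).ne']

section

variable {X Y : Type*} [NormedAddCommGroup X] [NormedSpace ℝ X]
  [NormedAddCommGroup Y] [NormedSpace ℝ Y]

theorem StrongDual.mul_norm_le_of_forall_lt (g : StrongDual ℝ X) {r u : ℝ} (hr : 0 ≤ r)
    (hg : ∀ x, ‖x‖ ≤ r → g x < u) :
    r * ‖g‖ ≤ u := by
  have hu : 0 < u := by simpa using hg 0 (by simpa using hr)
  rcases hr.eq_or_lt with rfl | hr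
  · simpa using hu.le
  rw [← le_div_iff₀' hr]
  refine ContinuousLinearMap.opNorm_le_of_unit_norm (div_nonneg hu.le hr.le) fun x hx => ?_
  have h₁ := hg (r • x) (by simp [norm_smul, hx, abs_of_pos hr])
  have h₂ := hg (-(r • x)) (by simp [norm_smul, hx, abs_of_pos hr])
  rw [map_neg, map_smul, smul_eq_mul] at h₂
  rw [map_smul, smul_eq_mul] at h₁
  rw [le_div_iff₀' hr, Real.norm_eq_abs]
  rcases abs_choice (g x) with h | h <;> rw [h] <;> linarith

/-- Goldstine's theorem, tested against finitely many functionals. -/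
theorem exists_norm_le_forall_abs_sub_lt (Λ : StrongDual ℝ (StrongDual ℝ X))
    (s : Finset (StrongDual ℝ X)) {ε : ℝ} (hε : 0 < ε) :
    ∃ x : X, ‖x‖ ≤ ‖Λ‖ ∧ ∀ ξ ∈ s, |ξ x - Λ ξ| < ε := by
  classical
  let T : X →L[ℝ] (s → ℝ) := ContinuousLinearMap.pi fun ξ => ξ
  let w : s → ℝ := fun ξ => Λ ξ
  suffices hw : w ∈ closure (T '' Metric.closedBall 0 ‖Λ‖) by
    obtain ⟨_, ⟨x, hx, rfl⟩, hxw⟩ := Metric.mem_closure_iff.mp hw ε hε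
    refine ⟨x, mem_closedBall_zero_iff.mp hx, fun ξ hξ => ?_⟩
    rw [abs_sub_comm]
    exact (dist_le_pi_dist w (T x) ⟨ξ, hξ⟩).trans_lt hxw
  by_contra hw
  obtain ⟨f, u, hfK, hfw⟩ := geometric_hahn_banach_closed_point
    (((convex_closedBall _ _).linear_image T.toLinearMap).closure) isClosed_closure hw
  let e : s → s → ℝ := fun ξ η => if ξ = η then 1 else 0
  have hf : ∀ y, f y = ∑ ξ, y ξ * f (e ξ) := fun y => by
    simpa only [smul_eq_mul, ContinuousLinearMap.coe_coe] using
      LinearMap.pi_apply_eq_sum_univ (f : (s → ℝ) →ₗ[ℝ] ℝ) y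
  have hfT : f.comp T = ∑ ξ : s, f (e ξ) • (ξ : StrongDual ℝ X) := by
    ext x
    rw [ContinuousLinearMap.comp_apply, hf, sum_apply]
    simp only [smul_apply, smul_eq_mul, mul_comm]
    rfl
  have hΛ : Λ (f.comp T) = f w := by
    rw [hfT, map_sum, hf]
    simp only [map_smul, smul_eq_mul, mul_comm]
    rfl
  have hnorm : ‖Λ‖ * ‖f.comp T‖ ≤ u := StrongDual.mul_norm_le_of_forall_lt _ (norm_nonneg Λ)
    fun x hx => hfK _ (subset_closure ⟨x, mem_closedBall_zero_iff.mpr hx, rfl⟩)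
  have := (le_abs_self _).trans (Λ.le_opNorm (f.comp T))
  linarith

theorem StrongDual.exists_tendsto_ultrafilter {ι : Type*} (U : Ultrafilter ι)
    {c : ι → StrongDual ℝ X} {R : ℝ} (hc : ∀ i, ‖c i‖ ≤ R) :
    ∃ c' : StrongDual ℝ X, ∀ x, Tendsto (fun i => c i x) U (𝓝 (c' x)) := by
  obtain ⟨c', -, hc'⟩ := (WeakDual.isCompact_closedBall 0 R).ultrafilter_le_nhds
    (U.map (StrongDual.toWeakDual ∘ c)) (by
      rw [Ultrafilter.coe_map, le_principal_iff, mem_map]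
      exact univ_mem' fun i => by simpa using hc i)
  exact ⟨c', tendsto_iff_forall_eval_tendsto_topDualPairing.mp hc'⟩

/-- `HasRwswProperty (πl a₀)` is the Rw*w-property of `a₀`: `(c i).comp T` is `b'_α a₀`. -/
def HasRwswProperty (T : Y →L[ℝ] X) : Prop :=
  ∀ {ι : Type} (l : Filter ι), l.NeBot → ∀ c : ι → StrongDual ℝ X,
    (∀ y, Tendsto (fun i => ((c i).comp T) y) l (𝓝 0)) →
    ∀ F : StrongDual ℝ (StrongDual ℝ Y), Tendsto (fun i => F ((c i).comp T)) l (𝓝 0)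

theorem exists_triangular_of_separating (T : Y →L[ℝ] X) (y'' : StrongDual ℝ (StrongDual ℝ Y))
    (Λ : StrongDual ℝ (StrongDual ℝ (StrongDual ℝ X)))
    (hΛ : ∀ x, Λ (inclusionInDoubleDual ℝ X x) = 0)
    (hΛy : Λ (y''.comp (ContinuousLinearMap.precomp ℝ T)) = 1) :
    ∃ (c : ℕ → StrongDual ℝ X) (b : ℕ → Y) (R : ℝ), (∀ k, ‖c k‖ ≤ R) ∧ (∀ m, ‖b m‖ ≤ ‖y''‖) ∧
      (∀ j k, j < k → |c k (T (b j))| < 1/8) ∧ (∀ k m, k ≤ m → 3/4 < c k (T (b m))) := by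
  classical
  choose pickC hpickC_norm hpickC using fun s : Finset (StrongDual ℝ (StrongDual ℝ X)) =>
    exists_norm_le_forall_abs_sub_lt Λ s (by norm_num : (0 : ℝ) < 1/8)
  choose pickB hpickB_norm hpickB using fun s : Finset (StrongDual ℝ Y) =>
    exists_norm_le_forall_abs_sub_lt y'' s (by norm_num : (0 : ℝ) < 1/8)
  let P : StrongDual ℝ X →L[ℝ] StrongDual ℝ Y := ContinuousLinearMap.precomp ℝ T
  let nextC (S : Finset (StrongDual ℝ X) × Finset Y) : StrongDual ℝ X :=
    pickC (insert (y''.comp P) (S.2.image fun b => inclusionInDoubleDual ℝ X (T b)))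
  let nextB (S : Finset (StrongDual ℝ X) × Finset Y) : Y :=
    pickB ((insert (nextC S) S.1).image P)
  -- `S k` holds the functionals and the vectors chosen before step `k`
  let S : ℕ → Finset (StrongDual ℝ X) × Finset Y := fun n =>
    Nat.rec (∅, ∅) (fun _ S => (insert (nextC S) S.1, insert (nextB S) S.2)) n
  have hS : ∀ j k, j < k → nextC (S j) ∈ (S k).1 ∧ nextB (S j) ∈ (S k).2 := by
    intro j k hjk
    induction k with
    | zero => omega
    | succ k ih =>
      rcases Nat.lt_succ_iff_lt_or_eq.mp hjk with h | rfl
      · exact ⟨Finset.mem_insert_of_mem (ih h).1, Finset.mem_insert_of_mem (ih h).2⟩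
      · exact ⟨Finset.mem_insert_self _ _, Finset.mem_insert_self _ _⟩
  have hnextC : ∀ S, ∀ ξ ∈ insert (y''.comp P) (S.2.image fun b => inclusionInDoubleDual ℝ X (T b)),
      |ξ (nextC S) - Λ ξ| < 1/8 := fun S => hpickC _
  have hnextB : ∀ S, ∀ c ∈ insert (nextC S) S.1, |c (T (nextB S)) - y'' (c.comp T)| < 1/8 :=
    fun S c hc => hpickB _ _ (Finset.mem_image_of_mem P hc)
  refine ⟨fun k => nextC (S k), fun k => nextB (S k), _, fun k => hpickC_norm _,
    fun m => hpickB_norm _, fun j k hjk => ?_, fun k m hkm => ?_⟩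
  · simpa [hΛ] using hnextC (S k) _
      (Finset.mem_insert_of_mem (Finset.mem_image_of_mem _ (hS j k hjk).2))
  · have h₁ := hnextC (S k) _ (Finset.mem_insert_self _ _)
    have h₂ := hnextB (S m) (nextC (S k)) (by
      rcases hkm.lt_or_eq with h | rfl
      · exact Finset.mem_insert_of_mem (hS k m h).1
      · exact Finset.mem_insert_self _ _)
    rw [hΛy] at h₁
    simp only [P, ContinuousLinearMap.comp_apply, ContinuousLinearMap.precomp_apply] at h₁
    rw [abs_lt] at h₁ h₂
    linarith [h₁.1, h₂.1]

theorem HasRwswProperty.false_of_triangular {T : Y →L[ℝ] X} (hT : HasRwswProperty T)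
    {c : ℕ → StrongDual ℝ X} {b : ℕ → Y} {R R' : ℝ} (hc : ∀ k, ‖c k‖ ≤ R)
    (hb : ∀ m, ‖b m‖ ≤ R') (hlow : ∀ j k, j < k → |c k (T (b j))| < 1/8)
    (hhigh : ∀ k m, k ≤ m → 3/4 < c k (T (b m))) : False := by
  let U : Ultrafilter ℕ := Ultrafilter.of atTop
  have hU : (U : Filter ℕ) ≤ atTop := Ultrafilter.of_le atTop
  obtain ⟨c', hc'⟩ := StrongDual.exists_tendsto_ultrafilter U hc
  obtain ⟨β, hβ⟩ := StrongDual.exists_tendsto_ultrafilter U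
    (c := fun m => inclusionInDoubleDual ℝ Y (b m))
    fun m => (NormedSpace.double_dual_bound ℝ Y (b m)).trans (hb m)
  have hnull := hT U U.neBot (fun k => c k - c')
    (fun y => by simpa using (hc' (T y)).sub_const (c' (T y))) β
  have hc'_small : ∀ m, |c' (T (b m))| ≤ 1/8 := fun m =>
    le_of_tendsto (hc' (T (b m))).abs
      (((eventually_gt_atTop m).filter_mono hU).mono fun k hk => (hlow m k hk).le)
  have hβ_large : ∀ k, 5/8 ≤ β ((c k - c').comp T) := fun k =>
    ge_of_tendsto (hβ _) (((eventually_ge_atTop k).filter_mono hU).mono fun m hm => by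
      have := abs_le.mp (hc'_small m)
      simp only [NormedSpace.dual_def, ContinuousLinearMap.comp_apply, sub_apply]
      linarith [hhigh k m hm])
  obtain ⟨k, hk⟩ := (hnull.eventually_lt_const (by norm_num : (0 : ℝ) < 5/8)).exists
  linarith [hβ_large k]

theorem HasRwswProperty.exists_apply_comp_eq [CompleteSpace X] {T : Y →L[ℝ] X}
    (hT : HasRwswProperty T) (y'' : StrongDual ℝ (StrongDual ℝ Y)) :
    ∃ x : X, ∀ c : StrongDual ℝ X, y'' (c.comp T) = c x := by
  by_contra! h
  let J := NormedSpace.inclusionInDoubleDualLi (E := X) ℝ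
  have hJ : IsClosed (LinearMap.range J.toLinearMap : Set (StrongDual ℝ (StrongDual ℝ X))) :=
    (J.isometry.isClosedEmbedding (α := X) (γ := StrongDual ℝ (StrongDual ℝ X))).isClosed_range
  obtain ⟨Λ, hΛ, hΛy⟩ := Submodule.exists_strongDual_eq_zero_of_notMem _ hJ
    (x := y''.comp (ContinuousLinearMap.precomp ℝ T)) (by
      rintro ⟨x, hx⟩
      obtain ⟨c, hc⟩ := h x
      exact hc (DFunLike.congr_fun hx c).symm)
  obtain ⟨c, b, R, hc, hb, hlow, hhigh⟩ :=
    exists_triangular_of_separating T y'' Λ (fun x => hΛ _ ⟨x, rfl⟩) hΛy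
  exact hT.false_of_triangular hc hb hlow hhigh

theorem wwCont_of_forall_apply_eq_eval
    (f : StrongDual ℝ (StrongDual ℝ X) → StrongDual ℝ (StrongDual ℝ Y))
    (hf : ∀ ψ : StrongDual ℝ Y, ∃ φ : StrongDual ℝ X, ∀ v, f v ψ = v φ) : WWCont f := by
  intro l u hu ψ
  obtain ⟨φ, hφ⟩ := hf ψ
  simpa only [hφ] using hu φ

end

theorem arens_apply {X Y Z : Type*} [NormedAddCommGroup X] [NormedSpace ℝ X]
    [NormedAddCommGroup Y] [NormedSpace ℝ Y] [NormedAddCommGroup Z] [NormedSpace ℝ Z]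
    (m : X →L[ℝ] Y →L[ℝ] Z) (x'' : StrongDual ℝ (StrongDual ℝ X))
    (y'' : StrongDual ℝ (StrongDual ℝ Y)) (z' : StrongDual ℝ Z) :
    arens m x'' y'' z' = x'' (arensHalf m y'' z') :=
  rfl

theorem arensHalf_apply_apply {X Y Z : Type*} [NormedAddCommGroup X] [NormedSpace ℝ X]
    [NormedAddCommGroup Y] [NormedSpace ℝ Y] [NormedAddCommGroup Z] [NormedSpace ℝ Z]
    (m : X →L[ℝ] Y →L[ℝ] Z) (y'' : StrongDual ℝ (StrongDual ℝ Y)) (z' : StrongDual ℝ Z) (x : X) :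
    arensHalf m y'' z' x = y'' (z'.comp (m x)) :=
  rfl

theorem arens_incl_apply {X Y Z : Type*} [NormedAddCommGroup X] [NormedSpace ℝ X]
    [NormedAddCommGroup Y] [NormedSpace ℝ Y] [NormedAddCommGroup Z] [NormedSpace ℝ Z]
    (m : X →L[ℝ] Y →L[ℝ] Z) (x : X) (y'' : StrongDual ℝ (StrongDual ℝ Y)) (z' : StrongDual ℝ Z) :
    arens m (incl x) y'' z' = y'' (z'.comp (m x)) :=
  rfl

theorem rightCenter_eq_of_factor_and_Rwsw_general {A B : Type*}
    [NonUnitalNormedRing A] [NormedSpace ℝ A]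
    [NormedAddCommGroup B] [NormedSpace ℝ B] [CompleteSpace B]
    (πl : A →L[ℝ] B →L[ℝ] B) (πr : B →L[ℝ] A →L[ℝ] B)
    (a₀ : A)
    (hfac : ∀ b'' : (B →L[ℝ] ℝ) →L[ℝ] ℝ, ∃ x'' : (B →L[ℝ] ℝ) →L[ℝ] ℝ,
      b'' = arens πl (incl a₀) x'')
    (hR : ∀ {ι : Type} (l : Filter ι), l.NeBot → ∀ b' : ι → (B →L[ℝ] ℝ),
      (∀ b : B, Filter.Tendsto
        (fun i => ((b' i).comp (πl a₀)) b) l (nhds (0 : ℝ))) →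
      ∀ F : (B →L[ℝ] ℝ) →L[ℝ] ℝ, Filter.Tendsto
        (fun i => F ((b' i).comp (πl a₀))) l (nhds (0 : ℝ))) :
    ∀ b'' : (B →L[ℝ] ℝ) →L[ℝ] ℝ,
      WWCont (fun a'' : (A →L[ℝ] ℝ) →L[ℝ] ℝ => arens πr b'' a'') := by
  intro b''
  obtain ⟨x'', rfl⟩ := hfac b''
  obtain ⟨z, hz⟩ := HasRwswProperty.exists_apply_comp_eq (T := πl a₀) hR x''
  refine wwCont_of_forall_apply_eq_eval _ fun ψ => ⟨ψ.comp (πr z), fun v => ?_⟩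
  rw [arens_apply, arens_incl_apply, hz, arensHalf_apply_apply]

/-- if `B** = a₀B**` for some `a₀ ∈ A` with the Rw*w-property with
respect to `B`, then `Z_{A**}(B**) = B**`. -/
theorem rightCenter_eq_of_factor_and_Rwsw {A B : Type*}
    [NonUnitalNormedRing A] [NormedSpace ℝ A] [IsScalarTower ℝ A A] [SMulCommClass ℝ A A]
    [CompleteSpace A] [NormedAddCommGroup B] [NormedSpace ℝ B] [CompleteSpace B]
    (πl : A →L[ℝ] B →L[ℝ] B) (πr : B →L[ℝ] A →L[ℝ] B)
    (hl : ∀ (a₁ a₂ : A) (b : B), πl (a₁ * a₂) b = πl a₁ (πl a₂ b))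
    (hr : ∀ (b : B) (a₁ a₂ : A), πr b (a₁ * a₂) = πr (πr b a₁) a₂)
    (hc : ∀ (a₁ : A) (b : B) (a₂ : A), πr (πl a₁ b) a₂ = πl a₁ (πr b a₂))
    (a₀ : A)
    (hfac : ∀ b'' : (B →L[ℝ] ℝ) →L[ℝ] ℝ, ∃ x'' : (B →L[ℝ] ℝ) →L[ℝ] ℝ,
      b'' = arens πl (incl a₀) x'')
    (hR : ∀ {ι : Type} (l : Filter ι), l.NeBot → ∀ b' : ι → (B →L[ℝ] ℝ),
      (∀ b : B, Filter.Tendsto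
        (fun i => ((b' i).comp (πl a₀)) b) l (nhds (0 : ℝ))) →
      ∀ F : (B →L[ℝ] ℝ) →L[ℝ] ℝ, Filter.Tendsto
        (fun i => F ((b' i).comp (πl a₀))) l (nhds (0 : ℝ))) :
    ∀ b'' : (B →L[ℝ] ℝ) →L[ℝ] ℝ,
      WWCont (fun a'' : (A →L[ℝ] ℝ) →L[ℝ] ℝ => arens πr b'' a'') :=
  rightCenter_eq_of_factor_and_Rwsw_general πl πr a₀ hfac hR
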